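/- Let G be an ICC group whose conjugation action on G ∖ {1} has spectral gap (i.e. G is non-inner amenable, witnessed by the permutation representation of G on ℓ²(G∖{1})). Then the diagonal conjugation action of G on the set G^ℕ ∖ {1} (the full direct power minus the identity sequence) also has spectral gap; consequently, any group Γ with G ≤ Γ ≤ G^ℕ (with G embedded diagonally) is non-inner amenable. -/

import Mathlib

/-- A unitary representation has spectral gap if some finite set of group elements uniformly
moves every vector. -/
def RepGap {G : Type*} [Group G] {H : Type*} [NormedAddCommGroup H]
    [InnerProductSpace ℂ H] [CompleteSpace H]
    (π : G →* unitary (H →L[ℂ] H)) : Prop :=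
  ∃ (F : Finset G) (ε : ℝ), 0 < ε ∧
    ∀ ξ : H, ∃ g ∈ F, ε * ‖ξ‖ ≤ ‖(π g : H →L[ℂ] H) ξ - ξ‖

/-- The permutation representation of `G` on `ℓ²(X)` associated to an action of `G` on `X`
has spectral gap. -/
def PermRepGap {G : Type*} [Group G] {X : Type*} (act : G → X → X) : Prop :=
  ∀ π : G →* unitary (lp (fun _ : X => ℂ) 2 →L[ℂ] lp (fun _ : X => ℂ) 2),
    (∀ (g : G) (ξ : lp (fun _ : X => ℂ) 2) (x : X),
        ((π g : lp (fun _ : X => ℂ) 2 →L[ℂ] lp (fun _ : X => ℂ) 2) ξ) x = ξ (act g⁻¹ x)) →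
    RepGap π

/-- Conjugation action on the set of nontrivial elements of a group. -/
def conjNI {G : Type*} [Group G] (g : G) (x : {h : G // h ≠ 1}) : {h : G // h ≠ 1} :=
  ⟨g * x.1 * g⁻¹, fun hc => x.2 (by
    have h1 : x.1 = g⁻¹ * (g * x.1 * g⁻¹) * g := by group
    rw [h1, hc]; group)⟩

/-! Spectral gap pulls back along equivariant maps `φ : X → Y`: to `ξ ∈ ℓ²(X)` associate
`y ↦ ‖ξ|_{φ⁻¹(y)}‖ ∈ ℓ²(Y)`. It has the same norm as `ξ`, and by the reverse triangle inequality
on each fiber it is moved by a group element at most as much as `ξ` is. Taking the first nontrivial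
coordinate of a sequence is equivariant for diagonal conjugation, which gives the gap on
`G^ℕ ∖ {1}`; the inclusion `Γ ∖ {1} → G^ℕ ∖ {1}` is equivariant for the diagonal copy of `G`. -/

noncomputable section

open scoped ENNReal lp

theorem Memℓp.comp_injective {α β : Type*} {E : α → Type*} [∀ i, NormedAddCommGroup (E i)]
    {p : ℝ≥0∞} {f : ∀ i, E i} (hf : Memℓp f p) {g : β → α} (hg : Function.Injective g) :
    Memℓp (fun b => f (g b)) p := by
  obtain rfl | rfl | hp := p.trichotomy
  · exact memℓp_zero ((memℓp_zero_iff.mp hf).preimage hg.injOn)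
  · exact memℓp_infty <|
      (memℓp_infty_iff.mp hf).mono (Set.range_comp_subset_range g fun i => ‖f i‖)
  · exact memℓp_gen ((hf.summable hp).comp_injective hg)

namespace lp

variable {X Y E : Type*} [NormedAddCommGroup E] {p : ℝ≥0∞}

def restrict (f : ℓ^p(X, E)) (s : Set X) : ℓ^p(s, E) :=
  ⟨fun x => f x, (lp.memℓp f).comp_injective Subtype.val_injective⟩

@[simp]
theorem restrict_apply (f : ℓ^p(X, E)) (s : Set X) (x : s) : restrict f s x = f x := rfl

theorem norm_eq_of_equiv (hp : 0 < p.toReal) {S T : Type*} {a : ℓ^p(S, E)} {b : ℓ^p(T, E)}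
    (e : S ≃ T) (h : ∀ s, a s = b (e s)) : ‖a‖ = ‖b‖ := by
  rw [norm_eq_tsum_rpow hp, norm_eq_tsum_rpow hp, ← e.tsum_eq]
  simp only [h]

theorem hasSum_norm_restrict_fiber_rpow (hp : 0 < p.toReal) (f : ℓ^p(X, E)) (φ : X → Y) :
    HasSum (fun y => ‖restrict f (φ ⁻¹' {y})‖ ^ p.toReal) (‖f‖ ^ p.toReal) := by
  simpa only [norm_rpow_eq_tsum hp, restrict_apply] using (hasSum_norm hp f).tsum_fiberwise φ

def fiberNorm (hp : 0 < p.toReal) (φ : X → Y) (f : ℓ^p(X, E)) : ℓ^p(Y, ℂ) :=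
  ⟨fun y => (‖restrict f (φ ⁻¹' {y})‖ : ℂ), memℓp_gen <| by
    simpa only [Complex.norm_real, Real.norm_of_nonneg (norm_nonneg' _)] using
      (hasSum_norm_restrict_fiber_rpow hp f φ).summable⟩

@[simp]
theorem fiberNorm_apply (hp : 0 < p.toReal) (φ : X → Y) (f : ℓ^p(X, E)) (y : Y) :
    fiberNorm hp φ f y = (‖restrict f (φ ⁻¹' {y})‖ : ℂ) := rfl

theorem norm_fiberNorm_apply (hp : 0 < p.toReal) (φ : X → Y) (f : ℓ^p(X, E)) (y : Y) :
    ‖fiberNorm hp φ f y‖ = ‖restrict f (φ ⁻¹' {y})‖ := by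
  rw [fiberNorm_apply, Complex.norm_real, Real.norm_of_nonneg (norm_nonneg' _)]

theorem norm_fiberNorm (hp : 0 < p.toReal) (φ : X → Y) (f : ℓ^p(X, E)) :
    ‖fiberNorm hp φ f‖ = ‖f‖ := by
  have hsum := hasSum_norm_restrict_fiber_rpow hp f φ
  rw [norm_eq_tsum_rpow hp]
  simp only [norm_fiberNorm_apply]
  rw [hsum.tsum_eq, one_div, Real.rpow_rpow_inv (norm_nonneg' _) hp.ne']

theorem norm_fiberNorm_sub_le [Fact (1 ≤ p)] (hp : 0 < p.toReal) (φ : X → Y)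
    (f g : ℓ^p(X, E)) : ‖fiberNorm hp φ f - fiberNorm hp φ g‖ ≤ ‖f - g‖ :=
  calc ‖fiberNorm hp φ f - fiberNorm hp φ g‖
      ≤ ‖fiberNorm hp φ (f - g)‖ := by
        refine norm_mono (ENNReal.toReal_pos_iff.mp hp).1.ne' fun y => ?_
        simp only [coeFn_sub, Pi.sub_apply, fiberNorm_apply, ← Complex.ofReal_sub,
          Complex.norm_real, norm_norm]
        exact abs_norm_sub_norm_le _ _
    _ = ‖f - g‖ := norm_fiberNorm hp φ (f - g)

theorem fiberNorm_apply_of_semiconj (hp : 0 < p.toReal) {φ : X → Y} {σ : Equiv.Perm X}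
    {τ : Equiv.Perm Y} (hφ : ∀ x, φ (σ x) = τ (φ x)) {f u : ℓ^p(X, E)}
    (hu : ∀ x, u x = f (σ.symm x)) (y : Y) :
    fiberNorm hp φ u y = fiberNorm hp φ f (τ.symm y) := by
  have hfiber : ∀ x, φ x = y ↔ φ (σ.symm x) = τ.symm y := fun x => by
    rw [Equiv.eq_symm_apply, ← hφ, Equiv.apply_symm_apply]
  simp only [fiberNorm_apply]
  exact congrArg _ (norm_eq_of_equiv hp (σ.symm.subtypeEquiv hfiber) fun x => hu x)

end lp

section PermRep

variable {X : Type*}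

def lp.permCongr (σ : Equiv.Perm X) : ℓ²(X, ℂ) ≃ₗᵢ[ℂ] ℓ²(X, ℂ) where
  toFun f := ⟨fun x => f (σ.symm x), (lp.memℓp f).comp_injective σ.symm.injective⟩
  invFun f := ⟨fun x => f (σ x), (lp.memℓp f).comp_injective σ.injective⟩
  map_add' _ _ := rfl
  map_smul' _ _ := rfl
  left_inv f := by ext x; simp
  right_inv f := by ext x; simp
  norm_map' f := lp.norm_eq_of_equiv (by norm_num) σ.symm fun _ => rfl

def permRep {K : Type*} [Group K] (c : K →* Equiv.Perm X) :
    K →* unitary (ℓ²(X, ℂ) →L[ℂ] ℓ²(X, ℂ)) :=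
  Unitary.linearIsometryEquiv.symm.toMonoidHom.comp <|
    (MonoidHom.mk' lp.permCongr fun _ _ => rfl).comp c

theorem permRep_apply {K : Type*} [Group K] (c : K →* Equiv.Perm X) (k : K) (ξ : ℓ²(X, ℂ))
    (x : X) : (permRep c k : ℓ²(X, ℂ) →L[ℂ] ℓ²(X, ℂ)) ξ x = ξ (c k⁻¹ x) := by
  rw [map_inv]
  rfl

end PermRep

theorem PermRepGap.of_equivariant {K G X Y : Type*} [Group K] [Group G]
    (cX : K →* Equiv.Perm X) (cY : G →* Equiv.Perm Y) (ι : G → K) (φ : X → Y)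
    (hφ : ∀ g x, φ (cX (ι g) x) = cY g (φ x)) (h : PermRepGap fun g => ⇑(cY g)) :
    PermRepGap fun k => ⇑(cX k) := by
  classical
  intro π hπ
  have hp : 0 < (2 : ℝ≥0∞).toReal := by norm_num
  obtain ⟨F, ε, hε, hF⟩ := h (permRep cY) (permRep_apply cY)
  refine ⟨F.image ι, ε, hε, fun ξ => ?_⟩
  obtain ⟨g, hgF, hgap⟩ := hF (lp.fiberNorm hp φ ξ)
  refine ⟨ι g, Finset.mem_image_of_mem ι hgF, ?_⟩
  set u := (π (ι g) : ℓ²(X, ℂ) →L[ℂ] ℓ²(X, ℂ)) ξ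
  have hpush : (permRep cY g : ℓ²(Y, ℂ) →L[ℂ] ℓ²(Y, ℂ)) (lp.fiberNorm hp φ ξ)
      = lp.fiberNorm hp φ u := by
    ext y
    have hu_apply : ∀ x, u x = ξ ((cX (ι g)).symm x) := fun x =>
      (hπ (ι g) ξ x).trans (congrArg ξ (by simp only [map_inv]; rfl))
    rw [permRep_apply, lp.fiberNorm_apply_of_semiconj hp (hφ g) hu_apply, map_inv]
    rfl
  calc ε * ‖ξ‖ = ε * ‖lp.fiberNorm hp φ ξ‖ := by rw [lp.norm_fiberNorm]
    _ ≤ ‖lp.fiberNorm hp φ u - lp.fiberNorm hp φ ξ‖ := hpush ▸ hgap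
    _ ≤ ‖u - ξ‖ := lp.norm_fiberNorm_sub_le hp φ u ξ

def conjPerm (H : Type*) [Group H] : H →* Equiv.Perm {h : H // h ≠ 1} where
  toFun g :=
    { toFun := conjNI g
      invFun := conjNI g⁻¹
      left_inv _ := Subtype.ext (by simp [conjNI, mul_assoc])
      right_inv _ := Subtype.ext (by simp [conjNI, mul_assoc]) }
  map_one' := by ext; simp [conjNI]
  map_mul' _ _ := by ext; simp [conjNI, mul_assoc]

section FirstNontrivialCoord

variable {G : Type*} [Group G]

open scoped Classical

theorem exists_apply_ne_one (x : {h : ℕ → G // h ≠ 1}) : ∃ n, x.1 n ≠ 1 :=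
  Function.ne_iff.mp x.2

def firstNontrivialCoord (x : {h : ℕ → G // h ≠ 1}) : {g : G // g ≠ 1} :=
  ⟨x.1 (Nat.find (exists_apply_ne_one x)), Nat.find_spec (exists_apply_ne_one x)⟩

theorem firstNontrivialCoord_conjNI (g : G) (x : {h : ℕ → G // h ≠ 1}) :
    firstNontrivialCoord (conjNI (fun _ => g) x) = conjNI g (firstNontrivialCoord x) := by
  have hfind : Nat.find (exists_apply_ne_one (conjNI (fun _ => g) x))
      = Nat.find (exists_apply_ne_one x) :=
    Nat.find_congr' fun {n} => by simp [conjNI, conj_eq_one_iff]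
  ext
  simp only [firstNontrivialCoord, hfind]
  rfl

end FirstNontrivialCoord

end

theorem stmt16_general {G : Type*} [Group G]
    (hgap : PermRepGap (fun g : G => conjNI g)) :
    PermRepGap (fun (g : G) (x : {h : (ℕ → G) // h ≠ 1}) => conjNI (fun _ => g) x) ∧
    ∀ Γ : Subgroup (ℕ → G), (∀ g : G, (fun _ => g) ∈ Γ) →
      PermRepGap (fun (γ : Γ) (x : {h : Γ // h ≠ 1}) => conjNI γ x) := by
  have hdiag : PermRepGap (fun (g : G) (x : {h : (ℕ → G) // h ≠ 1}) => conjNI (fun _ => g) x) :=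
    hgap.of_equivariant ((conjPerm (ℕ → G)).comp (Pi.constMonoidHom ℕ G)) (conjPerm G) id
      firstNontrivialCoord firstNontrivialCoord_conjNI
  refine ⟨hdiag, fun Γ hΓ => ?_⟩
  exact hdiag.of_equivariant (conjPerm Γ) ((conjPerm (ℕ → G)).comp (Pi.constMonoidHom ℕ G))
    (fun g => ⟨fun _ => g, hΓ g⟩) (fun x => ⟨x.1, fun h => x.2 (Subtype.ext h)⟩)
    (fun _ _ => rfl)

/-- If `G` is ICC and its conjugation action on `G ∖ {1}` has spectral gap (non-inner
amenability), then the diagonal conjugation action of `G` on `G^ℕ ∖ {1}` has spectral gap;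
consequently every group `Γ` with `G ≤ Γ ≤ G^ℕ` (with `G` diagonally embedded) is non-inner
amenable. -/
theorem stmt16 {G : Type*} [Group G]
    (hicc : ∀ g : G, g ≠ 1 → (Set.range fun x : G => x * g * x⁻¹).Infinite)
    (hgap : PermRepGap (fun g : G => conjNI g)) :
    PermRepGap (fun (g : G) (x : {h : (ℕ → G) // h ≠ 1}) => conjNI (fun _ => g) x) ∧
    ∀ Γ : Subgroup (ℕ → G), (∀ g : G, (fun _ => g) ∈ Γ) →
      PermRepGap (fun (γ : Γ) (x : {h : Γ // h ≠ 1}) => conjNI γ x) :=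
  stmt16_general hgap
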